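/- Let ν be a finite positive discrete measure on the unit circle T with infinite support, f ∈ L²(T, ν), and σ: Z → N a bijection. Then the sequence f_n = z^{σ^{-1}(n)} · f (n ∈ N) is never a Schauder basis of L²(T, ν). -/

import Mathlib

/-!
A Schauder basis of a Banach space has a finite basis constant (open mapping theorem), so
`‖F m‖ ≤ C * ‖F n - F m‖` whenever `m < n`. As `ν` lives on countably many points of the circle,
recurrence in the compact group `s → Circle` yields `r → ∞` with `z ^ r → 1` at every atom, and by
dominated convergence `F (σ r) - F (σ 0) = (z ^ r - 1) * f → 0` in `L²(ν)`. Hence the basis vector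
`F (σ 0) = f` vanishes, which is impossible.
-/

open Filter Topology MeasureTheory

/-- `f` is a Schauder basis of `H`: every `x` has a unique norm-convergent expansion. -/
def IsSchauderBasis {H : Type*} [NormedAddCommGroup H] [Module ℂ H]
    (f : ℕ → H) : Prop :=
  ∀ x : H, ∃! a : ℕ → ℂ,
    Tendsto (fun k => ∑ n ∈ Finset.range k, a n • f n) atTop (𝓝 x)

open scoped ENNReal

theorem sum_range_single_smul {R M : Type*} [Semiring R] [AddCommMonoid M] [Module R M]
    (F : ℕ → M) (m k : ℕ) :
    ∑ n ∈ Finset.range k, (Pi.single m (1 : R) : ℕ → R) n • F n = if m < k then F m else 0 := by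
  simp [Pi.single_apply]

theorem IsSchauderBasis.ne_zero {H : Type*} [NormedAddCommGroup H] [Module ℂ H] {F : ℕ → H}
    (hF : IsSchauderBasis F) (m : ℕ) : F m ≠ 0 := by
  intro hm
  have h := (hF 0).unique (y₁ := Pi.single m 1) (y₂ := 0) (by simp [sum_range_single_smul, hm])
    (by simp)
  simpa using congrFun h m

section BasisConstant

variable {H : Type*} [NormedAddCommGroup H] [NormedSpace ℂ H]

/-- Partial sum sequences of convergent series `∑ aₙ • Fₙ`, as continuous functions on `ℕ ∪ {∞}`
taking the sum of the series at `∞`. -/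
def partialSumSeqs (F : ℕ → H) : Submodule ℂ C(OnePoint ℕ, H) where
  carrier := {g | g (0 : ℕ) = 0 ∧ ∀ k : ℕ, g (k + 1 : ℕ) - g k ∈ ℂ ∙ F k}
  add_mem' := by
    rintro g h ⟨hg0, hg⟩ ⟨hh0, hh⟩
    refine ⟨by simp [hg0, hh0], fun k => ?_⟩
    simpa [add_sub_add_comm] using add_mem (hg k) (hh k)
  zero_mem' := by simp
  smul_mem' := by
    rintro c g ⟨hg0, hg⟩
    refine ⟨by simp [hg0], fun k => ?_⟩
    simpa [← smul_sub] using Submodule.smul_mem _ c (hg k)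

theorem isClosed_partialSumSeqs (F : ℕ → H) :
    IsClosed (partialSumSeqs F : Set C(OnePoint ℕ, H)) := by
  refine (isClosed_eq (continuous_eval_const _) continuous_const).inter ?_
  show IsClosed {g : C(OnePoint ℕ, H) | ∀ k : ℕ, _}
  rw [Set.ofPred_forall]
  exact isClosed_iInter fun k => (Submodule.closed_of_finiteDimensional _).preimage
    ((continuous_eval_const _).sub (continuous_eval_const _))

theorem exists_eq_sum_of_mem_partialSumSeqs {F : ℕ → H} {g : C(OnePoint ℕ, H)}
    (hg : g ∈ partialSumSeqs F) :
    ∃ a : ℕ → ℂ, ∀ k : ℕ, g k = ∑ n ∈ Finset.range k, a n • F n := by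
  obtain ⟨hg0, hg⟩ := hg
  choose a ha using fun k => Submodule.mem_span_singleton.1 (hg k)
  refine ⟨a, fun k => ?_⟩
  induction k with
  | zero => simpa using hg0
  | succ k ih => rw [Finset.sum_range_succ, ← ih, ha k, add_sub_cancel]

theorem continuousMapMkNat_mem_partialSumSeqs (F : ℕ → H) (a : ℕ → ℂ) {x : H}
    (hx : Tendsto (fun k => ∑ n ∈ Finset.range k, a n • F n) atTop (𝓝 x)) :
    OnePoint.continuousMapMkNat (fun k => ∑ n ∈ Finset.range k, a n • F n) x hx ∈
      partialSumSeqs F := by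
  refine ⟨Finset.sum_range_zero fun n => a n • F n,
    fun k => Submodule.mem_span_singleton.2 ⟨a k, ?_⟩⟩
  show _ = ∑ n ∈ Finset.range (k + 1), a n • F n - ∑ n ∈ Finset.range k, a n • F n
  rw [Finset.sum_range_succ, add_sub_cancel_left]

theorem IsSchauderBasis.exists_norm_sum_range_smul_le [CompleteSpace H] {F : ℕ → H}
    (hF : IsSchauderBasis F) :
    ∃ C, ∀ (a : ℕ → ℂ) (x : H),
      Tendsto (fun k => ∑ n ∈ Finset.range k, a n • F n) atTop (𝓝 x) →
      ∀ k, ‖∑ n ∈ Finset.range k, a n • F n‖ ≤ C * ‖x‖ := by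
  have : CompleteSpace (partialSumSeqs F) := (isClosed_partialSumSeqs F).completeSpace_coe
  -- `T` is a bijection of Banach spaces (by the basis property), so its inverse is bounded.
  let T : partialSumSeqs F →L[ℂ] H :=
    (ContinuousMap.evalCLM ℂ (OnePoint.infty : OnePoint ℕ)).comp (partialSumSeqs F).subtypeL
  have hinj : T.ker = ⊥ := by
    refine LinearMap.ker_eq_bot'.2 fun g hg => ?_
    obtain ⟨a, ha⟩ := exists_eq_sum_of_mem_partialSumSeqs g.2
    have hlim := (OnePoint.continuous_iff_from_nat _).1 (g : C(OnePoint ℕ, H)).continuous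
    simp only [ha] at hlim
    have ha0 : a = 0 := (hF 0).unique (by rwa [← hg]) (by simp)
    ext y
    induction y using OnePoint.rec with
    | infty => exact hg
    | coe k => simp [ha, ha0]
  have hsurj : T.range = ⊤ := by
    refine LinearMap.range_eq_top.2 fun x => ?_
    obtain ⟨a, hx, -⟩ := hF x
    exact ⟨⟨_, continuousMapMkNat_mem_partialSumSeqs F a hx⟩, rfl⟩
  let e := ContinuousLinearEquiv.ofBijective T hinj hsurj
  refine ⟨‖(e.symm : H →L[ℂ] partialSumSeqs F)‖, fun a x hx k => ?_⟩
  let g : partialSumSeqs F := ⟨_, continuousMapMkNat_mem_partialSumSeqs F a hx⟩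
  have hg : e.symm x = g := e.symm_apply_eq.2 rfl
  calc ‖∑ n ∈ Finset.range k, a n • F n‖ = ‖(g : C(OnePoint ℕ, H)) k‖ := rfl
    _ ≤ ‖g‖ := ContinuousMap.norm_coe_le_norm _ _
    _ = ‖e.symm x‖ := by rw [hg]
    _ ≤ _ := (e.symm : H →L[ℂ] partialSumSeqs F).le_opNorm x

theorem IsSchauderBasis.exists_norm_le_mul_norm_sub [CompleteSpace H] {F : ℕ → H}
    (hF : IsSchauderBasis F) : ∃ C, ∀ m n, m < n → ‖F m‖ ≤ C * ‖F n - F m‖ := by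
  obtain ⟨C, hC⟩ := hF.exists_norm_sum_range_smul_le
  refine ⟨C, fun m n hmn => ?_⟩
  have hsum : ∀ k, ∑ i ∈ Finset.range k, (Pi.single n 1 - Pi.single m 1 : ℕ → ℂ) i • F i
      = (if n < k then F n else 0) - if m < k then F m else 0 := by
    simp [sub_smul, Finset.sum_sub_distrib, sum_range_single_smul]
  have hlim : Tendsto
      (fun k => ∑ i ∈ Finset.range k, (Pi.single n 1 - Pi.single m 1 : ℕ → ℂ) i • F i)
      atTop (𝓝 (F n - F m)) :=
    tendsto_atTop_of_eventually_const (i₀ := n + 1) fun k hk => by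
      rw [hsum, if_pos (by omega), if_pos (by omega)]
  have hbound := hC _ _ hlim (m + 1)
  rwa [hsum, if_neg (by omega), if_pos (by omega), zero_sub, norm_neg] at hbound

end BasisConstant

theorem tendsto_eLpNorm_mul_of_tendsto_zero {α : Type*} [MeasurableSpace α] {μ : Measure α}
    {p : ℝ≥0∞} (hp : p ≠ ∞) {f : α → ℂ} (hf : MemLp f p μ) {g : ℕ → α → ℂ}
    (hg : ∀ n, AEStronglyMeasurable (g n) μ) {C : ℝ} (hgC : ∀ n, ∀ᵐ x ∂μ, ‖g n x‖ ≤ C)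
    (hg0 : ∀ᵐ x ∂μ, Tendsto (g · x) atTop (𝓝 0)) :
    Tendsto (fun n => eLpNorm (fun x => g n x * f x) p μ) atTop (𝓝 0) := by
  rcases eq_or_ne p 0 with rfl | hp0
  · simp
  have hq : 0 < p.toReal := ENNReal.toReal_pos hp0 hp
  have hfin := lintegral_rpow_enorm_lt_top_of_eLpNorm_lt_top hp0 hp hf.eLpNorm_lt_top
  have hint : Tendsto (fun n => ∫⁻ x, ‖g n x * f x‖ₑ ^ p.toReal ∂μ) atTop (𝓝 (∫⁻ _, 0 ∂μ)) :=
    tendsto_lintegral_of_dominated_convergence' (fun x => ‖C‖ₑ ^ p.toReal * ‖f x‖ₑ ^ p.toReal)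
      (fun n => ((hg n).mul hf.1).enorm.pow_const _)
      (fun n => (hgC n).mono fun x (hx : ‖g n x‖ ≤ C) => by
        show ‖g n x * f x‖ₑ ^ p.toReal ≤ _
        rw [enorm_mul, ENNReal.mul_rpow_of_nonneg _ _ hq.le]
        exact mul_le_mul_left (ENNReal.rpow_le_rpow
          (enorm_le_iff_norm_le.2 (hx.trans (Real.le_norm_self C))) hq.le) _)
      (by
        rw [lintegral_const_mul' _ _ (by finiteness)]
        exact ENNReal.mul_ne_top (by finiteness) hfin.ne)
      (hg0.mono fun x hx => by
        simpa [ENNReal.zero_rpow_of_pos hq] using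
          ((continuous_enorm.tendsto _).comp (hx.mul_const (f x))).ennrpow_const p.toReal)
  simp_rw [eLpNorm_eq_lintegral_rpow_enorm_toReal hp0 hp]
  simpa [ENNReal.zero_rpow_of_pos (inv_pos.2 hq)] using hint.ennrpow_const (1 / p.toReal)

theorem exists_strictMono_forall_tendsto_pow_one {s : Set ℂ} (hs : s.Countable)
    (hcirc : s ⊆ Metric.sphere 0 1) :
    ∃ ψ : ℕ → ℕ, StrictMono ψ ∧ ∀ z ∈ s, Tendsto (fun k => z ^ ψ k) atTop (𝓝 1) := by
  have : Countable s := hs.to_subtype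
  let x : s → Circle := fun z => ⟨z, hcirc z.2⟩
  obtain ⟨ψ, hψ, hlim⟩ := (mapClusterPt_one_atTop_pow x).tendsto_subseq
  refine ⟨ψ, hψ, fun z hz => ?_⟩
  exact ((continuous_subtype_val.comp (continuous_apply ⟨z, hz⟩)).tendsto 1).comp hlim

theorem exists_strictMono_tendsto_eLpNorm_pow_sub_one_mul {ν : Measure ℂ} {s : Set ℂ}
    (hs : s.Countable) (hcirc : s ⊆ Metric.sphere 0 1) (hνs : ν sᶜ = 0) {p : ℝ≥0∞} (hp : p ≠ ∞)
    {f : ℂ → ℂ} (hf : MemLp f p ν) :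
    ∃ ψ : ℕ → ℕ, StrictMono ψ ∧
      Tendsto (fun k => eLpNorm (fun z => (z ^ ψ k - 1) * f z) p ν) atTop (𝓝 0) := by
  obtain ⟨ψ, hψ, hlim⟩ := exists_strictMono_forall_tendsto_pow_one hs hcirc
  have hae : ∀ᵐ z ∂ν, z ∈ s := mem_ae_iff.2 hνs
  refine ⟨ψ, hψ, tendsto_eLpNorm_mul_of_tendsto_zero hp hf (C := 2) (fun k => by fun_prop)
    (fun k => hae.mono fun z hz => ?_) (hae.mono fun z hz => ?_)⟩
  · calc ‖z ^ ψ k - 1‖ ≤ ‖z ^ ψ k‖ + ‖(1 : ℂ)‖ := norm_sub_le _ _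
      _ = 2 := by rw [norm_pow, mem_sphere_zero_iff_norm.1 (hcirc hz)]; norm_num
  · simpa using (hlim z hz).sub_const 1

theorem zpow_mul_never_schauder_basis_general (ν : Measure ℂ)
    (hdiscrete : ∃ s : Set ℂ, s.Countable ∧ s ⊆ {z : ℂ | ‖z‖ = 1} ∧ ν sᶜ = 0)
    (σ : ℤ ≃ ℕ) (f : Lp ℂ 2 ν) (F : ℕ → Lp ℂ 2 ν)
    (hF : ∀ n, ⇑(F n) =ᵐ[ν] fun z : ℂ => z ^ (σ.symm n) * f z) :
    ¬ IsSchauderBasis F := by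
  intro hbasis
  obtain ⟨s, hs, hcirc, hνs⟩ := hdiscrete
  obtain ⟨C, hC⟩ := hbasis.exists_norm_le_mul_norm_sub
  obtain ⟨ψ, hψ, hsmall⟩ := exists_strictMono_tendsto_eLpNorm_pow_sub_one_mul hs
    (fun z hz => mem_sphere_zero_iff_norm.2 (hcirc hz)) hνs ENNReal.ofNat_ne_top (Lp.memLp f)
  have hdist (r : ℕ) :
      ‖F (σ r) - F (σ 0)‖ = (eLpNorm (fun z => (z ^ r - 1) * f z) 2 ν).toReal := by
    rw [Lp.norm_def]
    congr 1
    refine eLpNorm_congr_ae ?_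
    filter_upwards [Lp.coeFn_sub (F (σ r)) (F (σ 0)), hF (σ r), hF (σ 0)] with z h h₁ h₀
    rw [h, Pi.sub_apply, h₁, h₀]
    simp [sub_mul]
  have hlarge : ∀ᶠ k in atTop, σ 0 < σ (ψ k) := by
    have hσ : Tendsto (fun r : ℕ => σ r) atTop atTop :=
      (σ.injective.comp Nat.cast_injective).nat_tendsto_atTop
    exact (hσ.comp hψ.tendsto_atTop).eventually_gt_atTop (σ 0)
  have hF0 : ‖F (σ 0)‖ ≤ 0 := by
    refine ge_of_tendsto ?_ (hlarge.mono fun k hk => hC _ _ hk)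
    simpa [hdist] using ((ENNReal.tendsto_toReal ENNReal.zero_ne_top).comp hsmall).const_mul C
  exact hbasis.ne_zero (σ 0) (norm_le_zero_iff.1 hF0)

/-- For a finite discrete measure `ν` on the unit circle with infinite support,
any `f ∈ L²(ν)` and any bijection `σ : ℤ ≃ ℕ`, the sequence `n ↦ z ^ σ⁻¹(n) · f`
is never a Schauder basis of `L²(ν)`. -/
theorem zpow_mul_never_schauder_basis (ν : Measure ℂ) [IsFiniteMeasure ν]
    (hdiscrete : ∃ s : Set ℂ, s.Countable ∧ s ⊆ {z : ℂ | ‖z‖ = 1} ∧ ν sᶜ = 0)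
    (hinf : {z : ℂ | ν {z} ≠ 0}.Infinite)
    (σ : ℤ ≃ ℕ) (f : Lp ℂ 2 ν) (F : ℕ → Lp ℂ 2 ν)
    (hF : ∀ n, ⇑(F n) =ᵐ[ν] fun z : ℂ => z ^ (σ.symm n) * f z) :
    ¬ IsSchauderBasis F :=
  zpow_mul_never_schauder_basis_general ν hdiscrete σ f F hF
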